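/- Let (X, μ) be a probability measure space and h : X → ℝ measurable with e^h integrable, ∫ e^h dμ = 1, and ∫ h·e^h dμ = 0. Then h = 0 μ-almost everywhere. -/
import Mathlib


open MeasureTheory Real

theorem H_functional_zero_iff {X : Type*} [MeasurableSpace X] (μ : Measure X)
    [IsProbabilityMeasure μ] (h : X → ℝ)
    (hmeas : Measurable h)
    (hexp : Integrable (fun x => Real.exp (h x)) μ)
    (hint : Integrable (fun x => h x * Real.exp (h x)) μ)
    (hnorm : ∫ x, Real.exp (h x) ∂μ = 1)
    (hzero : ∫ x, h x * Real.exp (h x) ∂μ = 0) :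
    h =ᵐ[μ] 0 := by
  set g : X → ℝ := fun x => h x * Real.exp (h x) - Real.exp (h x) + 1 with hg
  have key : ∀ t : ℝ, (1 - t) * Real.exp t ≤ 1 := by
    intro t
    have h1 := Real.add_one_le_exp (-t)
    have h2 := mul_le_mul_of_nonneg_right h1 (Real.exp_pos t).le
    rw [← Real.exp_add] at h2
    simpa [sub_eq_neg_add] using h2
  have keystrict : ∀ t : ℝ, t ≠ 0 → (1 - t) * Real.exp t < 1 := by
    intro t ht
    have h1 := Real.add_one_lt_exp (x := -t) (by simpa using ht)
    have h2 := mul_lt_mul_of_pos_right h1 (Real.exp_pos t)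
    rw [← Real.exp_add] at h2
    simpa [sub_eq_neg_add] using h2
  have hgnn : 0 ≤ᵐ[μ] g := by
    filter_upwards with x
    have := key (h x)
    simp only [hg, Pi.zero_apply]
    nlinarith
  have hgint : Integrable g μ := (hint.sub hexp).add (integrable_const 1)
  have hgzero : ∫ x, g x ∂μ = 0 := by
    have e1 : ∫ x, g x ∂μ = ∫ x, (h x * Real.exp (h x) - Real.exp (h x)) + 1 ∂μ := rfl
    have i1 : Integrable (fun x => h x * Real.exp (h x) - Real.exp (h x)) μ := hint.sub hexp
    rw [e1, integral_add i1 (integrable_const 1),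
      integral_sub hint hexp, hzero, hnorm]
    simp
  have hgae : g =ᵐ[μ] 0 := (integral_eq_zero_iff_of_nonneg_ae hgnn hgint).mp hgzero
  filter_upwards [hgae] with x hx
  simp only [hg, Pi.zero_apply] at hx ⊢
  by_contra hne
  have := keystrict (h x) hne
  nlinarith
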